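/- Let 𝔍₀, 𝔍₁, …, 𝔍_k and 𝔍₀', 𝔍₁', …, 𝔍_k' be tuples of distinct points of Λ₊ with |𝔍_j| = |𝔍_j'| for j = 1, …, k. Then Tr((Θ(C_{𝔍₀})∘C_{𝔍₀'})·(Θ(C_{𝔍₁})∘C_{𝔍₁'})⋯(Θ(C_{𝔍_k})∘C_{𝔍_k'})) = conj(Tr(C_{𝔍₀}⋯C_{𝔍_k}))·Tr(C_{𝔍₀'}⋯C_{𝔍_k'}). -/

import Mathlib

open ComplexOrder

noncomputable section

/-- The setting of the paper: a finite set `Λ` with a fixed-point free involution `ϑ`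
exchanging `Λp` and its complement, the Clifford algebra (algebra of Majoranas) `carrier`
with self-adjoint generators `c i`, the global gauge automorphism `gauge`, the antilinear
reflection `*`-automorphism `Θ`, a square root `ζ` of `-1`, the twisted product `twist`,
a choice `P` of orderings of the subsets of `Λp` (giving the bases
`{C J : J ∈ P}` of `𝔄₊` and `{Θ(C J) ∘ C J' : J, J' ∈ P}` of `𝔄`),
and the tracial state `Tr` picking out the coefficient of `1` in the basis expansion. -/
structure MajoranaSetting where
  Λ : Type
  [fintypeΛ : Fintype Λ]
  [deceqΛ : DecidableEq Λ]
  ϑ : Λ → Λ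
  ϑ_invol : Function.Involutive ϑ
  ϑ_fixfree : ∀ i, ϑ i ≠ i
  Λp : Finset Λ
  ϑ_exch : ∀ i, i ∈ Λp ↔ ϑ i ∉ Λp
  carrier : Type
  [nring : NormedRing carrier]
  [nalg : NormedAlgebra ℂ carrier]
  [cmpl : CompleteSpace carrier]
  [starring : StarRing carrier]
  [starmod : StarModule ℂ carrier]
  c : Λ → carrier
  c_star : ∀ i, star (c i) = c i
  clifford : ∀ i j, c i * c j + c j * c i = if i = j then (2 : carrier) else 0
  gauge : carrier ≃ₐ[ℂ] carrier
  gauge_c : ∀ i, gauge (c i) = - c i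
  Θ : carrier → carrier
  Θ_add : ∀ x y, Θ (x + y) = Θ x + Θ y
  Θ_smul : ∀ (z : ℂ) (x), Θ (z • x) = (starRingEnd ℂ z) • Θ x
  Θ_mul : ∀ x y, Θ (x * y) = Θ x * Θ y
  Θ_star : ∀ x, Θ (star x) = star (Θ x)
  Θ_invol : ∀ x, Θ (Θ x) = x
  Θ_c : ∀ i, Θ (c i) = c (ϑ i)
  ζ : ℂ
  ζ_sq : ζ ^ 2 = -1
  twist : carrier → carrier → carrier
  twist_add_left : ∀ x x' y, twist (x + x') y = twist x y + twist x' y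
  twist_add_right : ∀ x y y', twist x (y + y') = twist x y + twist x y'
  twist_smul_left : ∀ (z : ℂ) (x y), twist (z • x) y = z • twist x y
  twist_smul_right : ∀ (z : ℂ) (x y), twist x (z • y) = z • twist x y
  twist_spec : ∀ (Am Ap Bm Bp : carrier) (a b a' b' : ℕ),
    a ≤ 1 → b ≤ 1 → a' ≤ 1 → b' ≤ 1 →
    Am ∈ Algebra.adjoin ℂ (c '' {i | i ∉ Λp}) →
    Ap ∈ Algebra.adjoin ℂ (c '' {i | i ∈ Λp}) →
    Bm ∈ Algebra.adjoin ℂ (c '' {i | i ∉ Λp}) →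
    Bp ∈ Algebra.adjoin ℂ (c '' {i | i ∈ Λp}) →
    gauge Am = ((-1 : ℂ) ^ a) • Am →
    gauge Ap = ((-1 : ℂ) ^ b) • Ap →
    gauge Bm = ((-1 : ℂ) ^ a') • Bm →
    gauge Bp = ((-1 : ℂ) ^ b') • Bp →
    twist (Am * Ap) (Bm * Bp)
      = ζ ^ ((a * b' : ℤ) - (b * a' : ℤ)) • (Am * Ap * (Bm * Bp))
  P : Finset (List Λ)
  P_nodup : ∀ J ∈ P, J.Nodup
  P_sub : ∀ J ∈ P, ∀ i ∈ J, i ∈ Λp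
  P_unique : ∀ s : Finset Λ, s ⊆ Λp → ∃! J, J ∈ P ∧ J.toFinset = s
  Tr : carrier →ₗ[ℂ] ℂ
  Tr_basis : ∀ J ∈ P, ∀ J' ∈ P,
    Tr (twist (Θ ((J.map c).prod)) ((J'.map c).prod))
      = if J = [] ∧ J' = [] then 1 else 0
  basis_indep : LinearIndependent ℂ
    (fun p : {J // J ∈ P} × {J // J ∈ P} =>
      twist (Θ ((p.1.1.map c).prod)) ((p.2.1.map c).prod))
  basis_span : ∀ x : carrier, x ∈ Submodule.span ℂ
    (Set.range fun p : {J // J ∈ P} × {J // J ∈ P} =>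
      twist (Θ ((p.1.1.map c).prod)) ((p.2.1.map c).prod))
  plus_span : ∀ x ∈ Algebra.adjoin ℂ (c '' {i | i ∈ Λp}),
    x ∈ Submodule.span ℂ (Set.range fun J : {J // J ∈ P} => ((J.1.map c).prod))

attribute [instance] MajoranaSetting.fintypeΛ MajoranaSetting.deceqΛ
  MajoranaSetting.nring MajoranaSetting.nalg MajoranaSetting.cmpl
  MajoranaSetting.starring MajoranaSetting.starmod

namespace MajoranaSetting

variable (S : MajoranaSetting)

/-- The subalgebra `𝔄₊` generated by the Majoranas on the `+` side. -/
def Aplus : Subalgebra ℂ S.carrier := Algebra.adjoin ℂ (S.c '' {i | i ∈ S.Λp})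

/-- The subalgebra `𝔄₋` generated by the Majoranas on the `-` side. -/
def Aminus : Subalgebra ℂ S.carrier := Algebra.adjoin ℂ (S.c '' {i | i ∉ S.Λp})

/-- The monomial `C_𝔍 = c_{i₁} ⋯ c_{i_k}`. -/
def C (J : List S.Λ) : S.carrier := (J.map S.c).prod

/-- `q_𝔍 = (-1)^{k(k-1)/2}`. -/
def q (J : List S.Λ) : ℂ := (-1 : ℂ) ^ (J.length * (J.length - 1) / 2)

/-- `s_𝔍 = ζ^{k(k-1)/2}`. -/
def sgn (J : List S.Λ) : ℂ := S.ζ ^ (J.length * (J.length - 1) / 2)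

/-- The exponential `e^x` in the (finite-dimensional) algebra `𝔄`. -/
def expm (x : S.carrier) : S.carrier := NormedSpace.exp x

/-- The Hamiltonian `H = -∑_{𝔍,𝔍' ∈ 𝒫₊} J_{𝔍𝔍'} Θ(C_𝔍) ∘ C_𝔍'`
determined by coupling constants `Jc`. -/
def Ham (Jc : List S.Λ → List S.Λ → ℂ) : S.carrier :=
  - ∑ J ∈ S.P, ∑ J' ∈ S.P, Jc J J' • S.twist (S.Θ (S.C J)) (S.C J')

/-- The index type of the basis `{C J : J ∈ 𝒫₊}`. -/
abbrev PIdx := {J : List S.Λ // J ∈ S.P}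

/-- The index type `𝒫₊ - {∅}` of couplings across the reflection plane. -/
abbrev PIdx0 := {p : S.PIdx // p.1 ≠ []}

/-- The full matrix of coupling constants. -/
def Jmat (Jc : List S.Λ → List S.Λ → ℂ) : Matrix S.PIdx S.PIdx ℂ :=
  Matrix.of fun p q => Jc p.1 q.1

/-- The matrix `J⁰` of coupling constants across the reflection plane. -/
def Jmat0 (Jc : List S.Λ → List S.Λ → ℂ) : Matrix S.PIdx0 S.PIdx0 ℂ :=
  Matrix.of fun p q => Jc p.1.1 q.1.1

end MajoranaSetting

/-! Write `T(F, G) = Θ(C_F) ∘ C_G`. For monomials on `Λ₊` the twisted product is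
`ζ^{|F||G|} Θ(C_F) C_G`, and since `Θ(C_{F'})` lives on `Λ₋`, moving `C_G` past it costs
`(-1)^{|G||F'|}`. When `|F| = |G|` and `|F'| = |G'|` these phases cancel, so
`T(F, G) T(F', G') = T(FF', GG')` and the factors `j ≥ 1` collapse to one factor `T(F', G')`.
For the remaining two factors, `Tr(Θ(A) B) = conj(Tr A) Tr B` on `𝔄₊` (checked on the basis),
and by gauge invariance `Tr` kills odd monomials of `𝔄₊`; if neither trace vanishes, all four
parities agree and the phase is again `1`. -/

lemma length_flatten_ofFn_mod_two {α : Type*} {k : ℕ} {F G : Fin k → List α}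
    (h : ∀ j, (F j).length % 2 = (G j).length % 2) :
    (List.ofFn F).flatten.length % 2 = (List.ofFn G).flatten.length % 2 := by
  simp only [List.length_flatten, List.map_ofFn, List.sum_ofFn, Function.comp_apply]
  rw [Finset.sum_nat_mod, Finset.sum_congr rfl fun j _ => h j, ← Finset.sum_nat_mod]

lemma forall_mem_flatten_ofFn {α : Type*} {k : ℕ} {F : Fin k → List α} {p : α → Prop}
    (h : ∀ j, ∀ x ∈ F j, p x) : ∀ x ∈ (List.ofFn F).flatten, p x :=
  List.forall_mem_flatten.mpr (List.forall_mem_ofFn_iff.mpr h)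

namespace MajoranaSetting

variable (S : MajoranaSetting)

lemma Θ_one : S.Θ 1 = 1 := by
  simpa [S.Θ_invol] using congrArg S.Θ (S.Θ_mul (S.Θ 1) 1)

lemma Θ_zero : S.Θ 0 = 0 := by
  simpa using S.Θ_smul 0 0

lemma C_nil : S.C [] = 1 := rfl

lemma C_cons (i : S.Λ) (J : List S.Λ) : S.C (i :: J) = S.c i * S.C J := by
  simp [C]

lemma C_append (J K : List S.Λ) : S.C (J ++ K) = S.C J * S.C K := by
  simp [C]

lemma C_flatten_ofFn {k : ℕ} (F : Fin k → List S.Λ) :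
    S.C (List.ofFn F).flatten = (List.ofFn fun j => S.C (F j)).prod := by
  simp [C, List.prod_flatten, List.map_ofFn, Function.comp_def]

lemma Θ_C (J : List S.Λ) : S.Θ (S.C J) = S.C (J.map S.ϑ) := by
  induction J with
  | nil => exact S.Θ_one
  | cons i J ih => rw [S.C_cons, S.Θ_mul, S.Θ_c, ih, List.map_cons, S.C_cons]

lemma gauge_C (J : List S.Λ) : S.gauge (S.C J) = (-1 : ℂ) ^ J.length • S.C J := by
  induction J with
  | nil => simp [C_nil]
  | cons i J ih =>
    rw [S.C_cons, map_mul, S.gauge_c, ih, mul_smul_comm, neg_mul, List.length_cons, pow_succ',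
      mul_smul, neg_one_smul, smul_neg]

lemma C_mem_Aplus {J : List S.Λ} (hJ : ∀ i ∈ J, i ∈ S.Λp) : S.C J ∈ S.Aplus := by
  induction J with
  | nil => exact one_mem _
  | cons i J ih =>
    rw [List.forall_mem_cons] at hJ
    exact S.C_cons i J ▸ mul_mem (Algebra.subset_adjoin ⟨i, hJ.1, rfl⟩) (ih hJ.2)

lemma C_mem_Aminus {J : List S.Λ} (hJ : ∀ i ∈ J, i ∉ S.Λp) : S.C J ∈ S.Aminus := by
  induction J with
  | nil => exact one_mem _
  | cons i J ih =>
    rw [List.forall_mem_cons] at hJ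
    exact S.C_cons i J ▸ mul_mem (Algebra.subset_adjoin ⟨i, hJ.1, rfl⟩) (ih hJ.2)

lemma Θ_C_mem_Aminus {J : List S.Λ} (hJ : ∀ i ∈ J, i ∈ S.Λp) : S.Θ (S.C J) ∈ S.Aminus := by
  rw [S.Θ_C]
  refine S.C_mem_Aminus fun j hj => ?_
  obtain ⟨i, hi, rfl⟩ := List.mem_map.mp hj
  exact (S.ϑ_exch i).mp (hJ i hi)

lemma c_mul_C_comm {i : S.Λ} {M : List S.Λ} (hi : i ∉ M) :
    S.c i * S.C M = (-1 : ℂ) ^ M.length • (S.C M * S.c i) := by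
  induction M with
  | nil => simp [C_nil]
  | cons j M ih =>
    rw [List.mem_cons, not_or] at hi
    have hij : S.c i * S.c j = -(S.c j * S.c i) := by
      have h := S.clifford i j
      rw [if_neg hi.1] at h
      exact eq_neg_of_add_eq_zero_left h
    rw [S.C_cons, ← mul_assoc, hij, neg_mul, mul_assoc, ih hi.2, List.length_cons, pow_succ,
      mul_smul, mul_smul_comm, neg_one_smul, smul_neg, mul_assoc]

lemma C_mul_C_comm {L M : List S.Λ} (h : ∀ i ∈ L, i ∉ M) :
    S.C L * S.C M = (-1 : ℂ) ^ (L.length * M.length) • (S.C M * S.C L) := by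
  induction L with
  | nil => simp [C_nil]
  | cons i L ih =>
    rw [List.forall_mem_cons] at h
    rw [S.C_cons, mul_assoc, ih h.2, mul_smul_comm, ← mul_assoc, S.c_mul_C_comm h.1,
      smul_mul_assoc, smul_smul, mul_assoc, ← pow_add, List.length_cons]
    congr 2
    ring

lemma C_mul_Θ_C_comm {F G : List S.Λ} (hF : ∀ i ∈ F, i ∈ S.Λp) (hG : ∀ i ∈ G, i ∈ S.Λp) :
    S.C G * S.Θ (S.C F) = (-1 : ℂ) ^ (G.length * F.length) • (S.Θ (S.C F) * S.C G) := by
  rw [S.Θ_C, S.C_mul_C_comm, List.length_map]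
  intro i hi hi'
  obtain ⟨j, hj, rfl⟩ := List.mem_map.mp hi'
  exact (S.ϑ_exch j).mp (hF j hj) (hG _ hi)

lemma twist_Θ_C {F G : List S.Λ} (hF : ∀ i ∈ F, i ∈ S.Λp) (hG : ∀ i ∈ G, i ∈ S.Λp) :
    S.twist (S.Θ (S.C F)) (S.C G)
      = S.ζ ^ (F.length % 2 * (G.length % 2)) • (S.Θ (S.C F) * S.C G) := by
  have h := S.twist_spec (S.Θ (S.C F)) 1 1 (S.C G) (F.length % 2) 0 0 (G.length % 2)
    (by omega) (by omega) (by omega) (by omega)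
    (S.Θ_C_mem_Aminus hF) (one_mem _) (one_mem _) (S.C_mem_Aplus hG)
    (by rw [S.Θ_C, S.gauge_C, List.length_map, ← neg_one_pow_eq_pow_mod_two]) (by simp)
    (by simp) (by rw [S.gauge_C, ← neg_one_pow_eq_pow_mod_two])
  rwa [mul_one, one_mul, Nat.cast_zero, zero_mul, sub_zero, ← Nat.cast_mul, zpow_natCast] at h

lemma zeta_phase_of_parity_eq {f g f' g' : ℕ} (h : f % 2 = g % 2) (h' : f' % 2 = g' % 2) :
    S.ζ ^ (f % 2 * (g % 2)) * S.ζ ^ (f' % 2 * (g' % 2)) * (-1) ^ (g * f')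
      = S.ζ ^ ((f + f') % 2 * ((g + g') % 2)) := by
  rw [neg_one_pow_eq_pow_mod_two, Nat.mul_mod, Nat.add_mod f, Nat.add_mod g, ← h, ← h']
  have ha := Nat.mod_lt f two_pos
  have ha' := Nat.mod_lt f' two_pos
  generalize f % 2 = a at *
  generalize f' % 2 = a' at *
  interval_cases a <;> interval_cases a' <;> norm_num
  linear_combination -S.ζ_sq

lemma twist_Θ_C_mul_twist_Θ_C {F G F' G' : List S.Λ} (hF : ∀ i ∈ F, i ∈ S.Λp)
    (hG : ∀ i ∈ G, i ∈ S.Λp) (hF' : ∀ i ∈ F', i ∈ S.Λp) (hG' : ∀ i ∈ G', i ∈ S.Λp) :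
    S.twist (S.Θ (S.C F)) (S.C G) * S.twist (S.Θ (S.C F')) (S.C G')
      = (S.ζ ^ (F.length % 2 * (G.length % 2)) * S.ζ ^ (F'.length % 2 * (G'.length % 2))
          * (-1) ^ (G.length * F'.length)) • (S.Θ (S.C (F ++ F')) * S.C (G ++ G')) := by
  rw [S.twist_Θ_C hF hG, S.twist_Θ_C hF' hG', smul_mul_smul_comm, mul_assoc (S.Θ _),
    ← mul_assoc (S.C G), S.C_mul_Θ_C_comm hF' hG, S.C_append, S.C_append, S.Θ_mul]
  simp only [smul_mul_assoc, mul_smul_comm, smul_smul, mul_assoc]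

lemma twist_Θ_C_mul_twist_Θ_C_of_parity {F G F' G' : List S.Λ} (hF : ∀ i ∈ F, i ∈ S.Λp)
    (hG : ∀ i ∈ G, i ∈ S.Λp) (hF' : ∀ i ∈ F', i ∈ S.Λp) (hG' : ∀ i ∈ G', i ∈ S.Λp)
    (h : F.length % 2 = G.length % 2) (h' : F'.length % 2 = G'.length % 2) :
    S.twist (S.Θ (S.C F)) (S.C G) * S.twist (S.Θ (S.C F')) (S.C G')
      = S.twist (S.Θ (S.C (F ++ F'))) (S.C (G ++ G')) := by
  rw [S.twist_Θ_C_mul_twist_Θ_C hF hG hF' hG', S.zeta_phase_of_parity_eq h h',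
    S.twist_Θ_C (List.forall_mem_append.mpr ⟨hF, hF'⟩) (List.forall_mem_append.mpr ⟨hG, hG'⟩),
    List.length_append, List.length_append]

lemma prod_ofFn_twist_Θ_C_of_parity {k : ℕ} {F G : Fin k → List S.Λ}
    (hF : ∀ j, ∀ i ∈ F j, i ∈ S.Λp) (hG : ∀ j, ∀ i ∈ G j, i ∈ S.Λp)
    (h : ∀ j, (F j).length % 2 = (G j).length % 2) :
    (List.ofFn fun j => S.twist (S.Θ (S.C (F j))) (S.C (G j))).prod
      = S.twist (S.Θ (S.C (List.ofFn F).flatten)) (S.C (List.ofFn G).flatten) := by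
  induction k with
  | zero => simpa [C_nil, Θ_one] using (S.twist_Θ_C (F := []) (G := []) (by simp) (by simp)).symm
  | succ k ih =>
    rw [List.ofFn_succ, List.prod_cons, ih (fun j => hF j.succ) (fun j => hG j.succ)
      (fun j => h j.succ), S.twist_Θ_C_mul_twist_Θ_C_of_parity (hF 0) (hG 0) _ _ (h 0)
      (length_flatten_ofFn_mod_two fun j => h j.succ), List.ofFn_succ, List.ofFn_succ,
      List.flatten_cons, List.flatten_cons]
    · exact forall_mem_flatten_ofFn fun j => hF j.succ
    · exact forall_mem_flatten_ofFn fun j => hG j.succ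

lemma nil_mem_P : [] ∈ S.P := by
  obtain ⟨J, ⟨hJP, hJ⟩, -⟩ := S.P_unique ∅ (Finset.empty_subset _)
  rwa [(List.toFinset_eq_empty_iff J).mp hJ] at hJP

lemma Tr_Θ_C_mul_C {J J' : List S.Λ} (hJ : J ∈ S.P) (hJ' : J' ∈ S.P) :
    S.Tr (S.Θ (S.C J) * S.C J') = if J = [] ∧ J' = [] then 1 else 0 := by
  have h : S.Tr (S.twist (S.Θ (S.C J)) (S.C J')) = _ := S.Tr_basis J hJ J' hJ'
  rw [S.twist_Θ_C (S.P_sub J hJ) (S.P_sub J' hJ'), map_smul, smul_eq_mul] at h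
  split_ifs at h ⊢ with hnil
  · obtain ⟨rfl, rfl⟩ := hnil
    simpa using h
  · exact (mul_eq_zero.mp h).resolve_left (pow_ne_zero _ fun h0 => by simpa [h0] using S.ζ_sq)

lemma Tr_C {J : List S.Λ} (hJ : J ∈ S.P) : S.Tr (S.C J) = if J = [] then 1 else 0 := by
  simpa [C_nil, Θ_one] using S.Tr_Θ_C_mul_C S.nil_mem_P hJ

lemma Tr_Θ_mul {A B : S.carrier} (hA : A ∈ S.Aplus) (hB : B ∈ S.Aplus) :
    S.Tr (S.Θ A * B) = starRingEnd ℂ (S.Tr A) * S.Tr B := by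
  have hA' := S.plus_span A hA
  clear hA
  induction hA' using Submodule.span_induction with
  | mem x hx =>
    obtain ⟨J, rfl⟩ := hx
    refine LinearMap.eqOn_span' (f := S.Tr ∘ₗ LinearMap.mulLeft ℂ (S.Θ (S.C J.1)))
      (g := starRingEnd ℂ (S.Tr (S.C J.1)) • S.Tr) ?_ (S.plus_span B hB)
    rintro _ ⟨J', rfl⟩
    change S.Tr (S.Θ (S.C J.1) * S.C J'.1) = starRingEnd ℂ (S.Tr (S.C J.1)) * S.Tr (S.C J'.1)
    rw [S.Tr_Θ_C_mul_C J.2 J'.2, S.Tr_C J.2, S.Tr_C J'.2]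
    split_ifs <;> simp_all
  | zero => simp [Θ_zero]
  | add x y _ _ hx hy => rw [S.Θ_add, add_mul, map_add, map_add, map_add, hx, hy, add_mul]
  | smul z x _ hx =>
    rw [S.Θ_smul, smul_mul_assoc, map_smul, map_smul, smul_eq_mul, smul_eq_mul, hx, map_mul,
      mul_assoc]

lemma Tr_gauge {A : S.carrier} (hA : A ∈ S.Aplus) : S.Tr (S.gauge A) = S.Tr A := by
  refine LinearMap.eqOn_span' (f := S.Tr ∘ₗ S.gauge.toLinearMap) (g := S.Tr) ?_ (S.plus_span A hA)
  rintro _ ⟨J, rfl⟩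
  change S.Tr (S.gauge (S.C J.1)) = S.Tr (S.C J.1)
  rw [S.gauge_C, map_smul, S.Tr_C J.2, smul_eq_mul]
  split_ifs with hnil <;> simp [hnil]

lemma Tr_C_eq_zero_of_odd {J : List S.Λ} (hJ : ∀ i ∈ J, i ∈ S.Λp) (hodd : J.length % 2 = 1) :
    S.Tr (S.C J) = 0 := by
  have h := S.Tr_gauge (S.C_mem_Aplus hJ)
  rw [S.gauge_C, neg_one_pow_eq_pow_mod_two, hodd, pow_one, neg_one_smul, map_neg,
    neg_eq_iff_add_eq_zero, ← two_mul] at h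
  exact (mul_eq_zero.mp h).resolve_left two_ne_zero

lemma Tr_twist_Θ_C_mul_twist_Θ_C {F G F' G' : List S.Λ} (hF : ∀ i ∈ F, i ∈ S.Λp)
    (hG : ∀ i ∈ G, i ∈ S.Λp) (hF' : ∀ i ∈ F', i ∈ S.Λp) (hG' : ∀ i ∈ G', i ∈ S.Λp)
    (h' : F'.length % 2 = G'.length % 2) :
    S.Tr (S.twist (S.Θ (S.C F)) (S.C G) * S.twist (S.Θ (S.C F')) (S.C G'))
      = starRingEnd ℂ (S.Tr (S.C (F ++ F'))) * S.Tr (S.C (G ++ G')) := by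
  have hFF' := List.forall_mem_append.mpr ⟨hF, hF'⟩
  have hGG' := List.forall_mem_append.mpr ⟨hG, hG'⟩
  rw [S.twist_Θ_C_mul_twist_Θ_C hF hG hF' hG', map_smul, smul_eq_mul,
    S.Tr_Θ_mul (S.C_mem_Aplus hFF') (S.C_mem_Aplus hGG')]
  by_cases hFodd : (F ++ F').length % 2 = 1
  · simp [S.Tr_C_eq_zero_of_odd hFF' hFodd]
  by_cases hGodd : (G ++ G').length % 2 = 1
  · simp [S.Tr_C_eq_zero_of_odd hGG' hGodd]
  rw [List.length_append] at hFodd hGodd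
  have h : F.length % 2 = G.length % 2 := by omega
  rw [S.zeta_phase_of_parity_eq h h', show (F.length + F'.length) % 2 = 0 by omega, zero_mul,
    pow_zero, one_mul]

end MajoranaSetting

theorem trace_twisted_product_factorizes_general (S : MajoranaSetting) (k : ℕ)
    (F G : Fin (k + 1) → List S.Λ)
    (hFp : ∀ j, ∀ i ∈ F j, i ∈ S.Λp) (hGp : ∀ j, ∀ i ∈ G j, i ∈ S.Λp)
    (hdeg : ∀ j : Fin (k + 1), j ≠ 0 → (F j).length % 2 = (G j).length % 2) :
    S.Tr ((List.ofFn fun j => S.twist (S.Θ (S.C (F j))) (S.C (G j))).prod)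
      = starRingEnd ℂ (S.Tr ((List.ofFn fun j => S.C (F j)).prod))
        * S.Tr ((List.ofFn fun j => S.C (G j)).prod) := by
  have hdeg' : ∀ j : Fin k, (F j.succ).length % 2 = (G j.succ).length % 2 :=
    fun j => hdeg j.succ j.succ_ne_zero
  rw [List.ofFn_succ, List.prod_cons,
    S.prod_ofFn_twist_Θ_C_of_parity (fun j => hFp j.succ) (fun j => hGp j.succ) hdeg',
    S.Tr_twist_Θ_C_mul_twist_Θ_C (hFp 0) (hGp 0)
      (forall_mem_flatten_ofFn fun j => hFp j.succ) (forall_mem_flatten_ofFn fun j => hGp j.succ)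
      (length_flatten_ofFn_mod_two hdeg'),
    ← S.C_flatten_ofFn, ← S.C_flatten_ofFn, List.ofFn_succ, List.ofFn_succ (f := G),
    List.flatten_cons, List.flatten_cons]

/-- Lemma 4.3 of the paper: if `|𝔍_j| = |𝔍'_j|` for `j = 1, …, k`,
then the trace of the product of twisted basis elements factorizes:
`Tr((Θ(C_{𝔍₀})∘C_{𝔍₀'}) ⋯ (Θ(C_{𝔍_k})∘C_{𝔍_k'}))
  = conj(Tr(C_{𝔍₀}⋯C_{𝔍_k})) · Tr(C_{𝔍₀'}⋯C_{𝔍_k'})`. -/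
theorem trace_twisted_product_factorizes (S : MajoranaSetting) (k : ℕ)
    (F G : Fin (k + 1) → List S.Λ)
    (hFnd : ∀ j, (F j).Nodup) (hGnd : ∀ j, (G j).Nodup)
    (hFp : ∀ j, ∀ i ∈ F j, i ∈ S.Λp) (hGp : ∀ j, ∀ i ∈ G j, i ∈ S.Λp)
    (hdeg : ∀ j : Fin (k + 1), j ≠ 0 → (F j).length % 2 = (G j).length % 2) :
    S.Tr ((List.ofFn fun j => S.twist (S.Θ (S.C (F j))) (S.C (G j))).prod)
      = starRingEnd ℂ (S.Tr ((List.ofFn fun j => S.C (F j)).prod))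
        * S.Tr ((List.ofFn fun j => S.C (G j)).prod) :=
  trace_twisted_product_factorizes_general S k F G hFp hGp hdeg
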